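/- Let A be a k-linear Hopf category with object class X. For all x, y, z ∈ X, the canonical map can^z_{x,y} : A_{z,x} ⊗_k A_{x,y} → A_{z,y} ⊗_k A_{x,y}, a ⊗ b ↦ a b_(1) ⊗ b_(2), is bijective, and its two-sided inverse is the k-linear map A_{z,y} ⊗_k A_{x,y} → A_{z,x} ⊗_k A_{x,y} determined by a ⊗ b ↦ a S_{x,y}(b_(1)) ⊗ b_(2). -/
import Mathlib


open TensorProduct

/-- The canonical map `can^z_{x,y} : A_{z,x} ⊗ A_{x,y} → A_{z,y} ⊗ A_{x,y}`,
`a ⊗ b ↦ a b₍₁₎ ⊗ b₍₂₎`. -/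
noncomputable def canMap
    {k : Type*} [CommRing k] {X : Type*}
    (A : X → X → Type*)
    [∀ x y, AddCommGroup (A x y)] [∀ x y, Module k (A x y)]
    (Δ : ∀ x y, A x y →ₗ[k] A x y ⊗[k] A x y)
    (mul : ∀ x y z, A x y →ₗ[k] A y z →ₗ[k] A x z)
    (z x y : X) :
    (A z x ⊗[k] A x y) →ₗ[k] (A z y ⊗[k] A x y) :=
  (TensorProduct.map (TensorProduct.lift (mul z x y)) LinearMap.id)
    ∘ₗ (TensorProduct.assoc k (A z x) (A x y) (A x y)).symm.toLinearMap
    ∘ₗ (TensorProduct.map LinearMap.id (Δ x y))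

/-- The inverse of the canonical map, `a ⊗ b ↦ a S(b₍₁₎) ⊗ b₍₂₎`. -/
noncomputable def canInv
    {k : Type*} [CommRing k] {X : Type*}
    (A : X → X → Type*)
    [∀ x y, AddCommGroup (A x y)] [∀ x y, Module k (A x y)]
    (Δ : ∀ x y, A x y →ₗ[k] A x y ⊗[k] A x y)
    (mul : ∀ x y z, A x y →ₗ[k] A y z →ₗ[k] A x z)
    (S : ∀ x y, A x y →ₗ[k] A y x)
    (z x y : X) :
    (A z y ⊗[k] A x y) →ₗ[k] (A z x ⊗[k] A x y) :=
  (TensorProduct.map (TensorProduct.lift (mul z y x)) LinearMap.id)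
    ∘ₗ (TensorProduct.assoc k (A z y) (A y x) (A x y)).symm.toLinearMap
    ∘ₗ (TensorProduct.map LinearMap.id ((TensorProduct.map (S x y) LinearMap.id) ∘ₗ (Δ x y)))

section helpers

variable {k : Type*} [CommRing k] {X : Type*}
    (A : X → X → Type*)
    [∀ x y, AddCommGroup (A x y)] [∀ x y, Module k (A x y)]
    (Δ : ∀ x y, A x y →ₗ[k] A x y ⊗[k] A x y)
    (mul : ∀ x y z, A x y →ₗ[k] A y z →ₗ[k] A x z)
    (S : ∀ x y, A x y →ₗ[k] A y x)

lemma canMap_tmul (z x y : X) (a : A z x) (b : A x y) :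
    canMap A Δ mul z x y (a ⊗ₜ b)
      = TensorProduct.map (mul z x y a) LinearMap.id (Δ x y b) := by
  have h : ∀ t : A x y ⊗[k] A x y,
      TensorProduct.map (TensorProduct.lift (mul z x y)) LinearMap.id
        ((TensorProduct.assoc k (A z x) (A x y) (A x y)).symm (a ⊗ₜ t))
      = TensorProduct.map (mul z x y a) LinearMap.id t := by
    intro t
    induction t using TensorProduct.induction_on with
    | zero => simp
    | tmul p q => simp
    | add s t hs ht => simp [tmul_add, hs, ht]
  simpa [canMap] using h (Δ x y b)

lemma canInv_tmul (z x y : X) (c : A z y) (d : A x y) :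
    canInv A Δ mul S z x y (c ⊗ₜ d)
      = TensorProduct.map ((mul z y x c) ∘ₗ S x y) LinearMap.id (Δ x y d) := by
  have h : ∀ t : A x y ⊗[k] A x y,
      TensorProduct.map (TensorProduct.lift (mul z y x)) LinearMap.id
        ((TensorProduct.assoc k (A z y) (A y x) (A x y)).symm
          (c ⊗ₜ (TensorProduct.map (S x y) LinearMap.id t)))
      = TensorProduct.map ((mul z y x c) ∘ₗ S x y) LinearMap.id t := by
    intro t
    induction t using TensorProduct.induction_on with
    | zero => simp
    | tmul p q => simp
    | add s t hs ht => simp [tmul_add, hs, ht]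
  simpa [canInv] using h (Δ x y d)

end helpers
theorem canonical_map_bijective_with_explicit_inverse
    {k : Type*} [CommRing k] {X : Type*}
    (A : X → X → Type*)
    [∀ x y, AddCommGroup (A x y)] [∀ x y, Module k (A x y)]
    (Δ : ∀ x y, A x y →ₗ[k] A x y ⊗[k] A x y)
    (ε : ∀ x y, A x y →ₗ[k] k)
    (mul : ∀ x y z, A x y →ₗ[k] A y z →ₗ[k] A x z)
    (one : ∀ x, A x x)
    (coassoc : ∀ x y (a : A x y),
      (TensorProduct.assoc k (A x y) (A x y) (A x y))
          ((TensorProduct.map (Δ x y) LinearMap.id) (Δ x y a))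
        = (TensorProduct.map LinearMap.id (Δ x y)) (Δ x y a))
    (counit_left : ∀ x y (a : A x y),
      (TensorProduct.lid k (A x y)) ((TensorProduct.map (ε x y) LinearMap.id) (Δ x y a)) = a)
    (counit_right : ∀ x y (a : A x y),
      (TensorProduct.rid k (A x y)) ((TensorProduct.map LinearMap.id (ε x y)) (Δ x y a)) = a)
    (mul_assoc' : ∀ x y z w (a : A x y) (b : A y z) (c : A z w),
      mul x z w (mul x y z a b) c = mul x y w a (mul y z w b c))
    (one_mul' : ∀ x y (a : A x y), mul x x y (one x) a = a)
    (mul_one' : ∀ x y (a : A x y), mul x y y a (one y) = a)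
    (Δ_mul : ∀ x y z (a : A x y) (b : A y z),
      Δ x z (mul x y z a b)
        = (TensorProduct.map (TensorProduct.lift (mul x y z)) (TensorProduct.lift (mul x y z)))
            ((TensorProduct.tensorTensorTensorComm k (A x y) (A x y) (A y z) (A y z))
              ((Δ x y a) ⊗ₜ[k] (Δ y z b))))
    (ε_mul : ∀ x y z (a : A x y) (b : A y z),
      ε x z (mul x y z a b) = ε x y a * ε y z b)
    (Δ_one : ∀ x, Δ x x (one x) = (one x) ⊗ₜ[k] (one x))
    (ε_one : ∀ x, ε x x (one x) = 1)
    (S : ∀ x y, A x y →ₗ[k] A y x)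
    (S_left : ∀ x y (h : A x y),
      (TensorProduct.lift (mul x y x)) ((TensorProduct.map LinearMap.id (S x y)) (Δ x y h))
        = ε x y h • one x)
    (S_right : ∀ x y (h : A x y),
      (TensorProduct.lift (mul y x y)) ((TensorProduct.map (S x y) LinearMap.id) (Δ x y h))
        = ε x y h • one y)
 :
    ∀ x y z,
      Function.Bijective (canMap A Δ mul z x y)
      ∧ (canInv A Δ mul S z x y) ∘ₗ (canMap A Δ mul z x y) = LinearMap.id
      ∧ (canMap A Δ mul z x y) ∘ₗ (canInv A Δ mul S z x y) = LinearMap.id := by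

  intro x y z
  have key1 : (canInv A Δ mul S z x y) ∘ₗ (canMap A Δ mul z x y) = LinearMap.id := by
    apply TensorProduct.ext'
    intro a b
    obtain ⟨s, hs⟩ := TensorProduct.exists_finset (Δ x y b)
    set K : A x y ⊗[k] (A x y ⊗[k] A x y) →ₗ[k] A z x ⊗[k] A x y :=
      TensorProduct.lift ((LinearMap.rTensorHom (A x y)) ∘ₗ (LinearMap.lcomp k _ (S x y))
        ∘ₗ ((mul z y x) ∘ₗ (mul z x y a))) with hK
    have hK1 : ∀ (u : A x y) (t : A x y ⊗[k] A x y),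
        K (u ⊗ₜ t)
          = TensorProduct.map ((mul z y x ((mul z x y a) u)) ∘ₗ S x y) LinearMap.id t := by
      intro u t
      simp only [hK, TensorProduct.lift.tmul, LinearMap.comp_apply, LinearMap.rTensorHom,
        LinearMap.coe_mk, AddHom.coe_mk, LinearMap.rTensor, LinearMap.lcomp_apply']
    have hK2 : ∀ (t : A x y ⊗[k] A x y) (v : A x y),
        K ((TensorProduct.assoc k (A x y) (A x y) (A x y)) (t ⊗ₜ v))
          = (mul z x x a (TensorProduct.lift (mul x y x)
              ((TensorProduct.map LinearMap.id (S x y)) t))) ⊗ₜ v := by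
      intro t v
      induction t using TensorProduct.induction_on with
      | zero => simp
      | tmul p q => simp [hK1, mul_assoc']
      | add s t h1 h2 => simp [add_tmul, h1, h2]
    have hb : (∑ i ∈ s, (ε x y i.1) • i.2) = b := by
      have h := counit_left x y b
      rw [hs] at h
      simpa using h
    calc (canInv A Δ mul S z x y) ((canMap A Δ mul z x y) (a ⊗ₜ b))
        = (canInv A Δ mul S z x y)
            (TensorProduct.map (mul z x y a) LinearMap.id (Δ x y b)) := by
          rw [canMap_tmul]
      _ = ∑ i ∈ s, (canInv A Δ mul S z x y) ((mul z x y a i.1) ⊗ₜ i.2) := by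
          rw [hs]; simp
      _ = ∑ i ∈ s, K (i.1 ⊗ₜ Δ x y i.2) := by
          simp [canInv_tmul, hK1]
      _ = K ((TensorProduct.map LinearMap.id (Δ x y)) (Δ x y b)) := by
          rw [hs]; simp
      _ = K ((TensorProduct.assoc k (A x y) (A x y) (A x y))
            ((TensorProduct.map (Δ x y) LinearMap.id) (Δ x y b))) := by
          rw [coassoc]
      _ = ∑ i ∈ s, K ((TensorProduct.assoc k (A x y) (A x y) (A x y))
            ((Δ x y i.1) ⊗ₜ i.2)) := by
          rw [hs]; simp
      _ = ∑ i ∈ s, (mul z x x a ((ε x y i.1) • one x)) ⊗ₜ i.2 := by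
          simp [hK2, S_left]
      _ = ∑ i ∈ s, (ε x y i.1) • (a ⊗ₜ[k] i.2) := by
          simp [mul_one', smul_tmul']
      _ = a ⊗ₜ b := by
          simp only [← tmul_smul, ← tmul_sum, hb]
      _ = LinearMap.id (R := k) (a ⊗ₜ[k] b) := rfl
  have key2 : (canMap A Δ mul z x y) ∘ₗ (canInv A Δ mul S z x y) = LinearMap.id := by
    apply TensorProduct.ext'
    intro c d
    obtain ⟨s, hs⟩ := TensorProduct.exists_finset (Δ x y d)
    set K : A x y ⊗[k] (A x y ⊗[k] A x y) →ₗ[k] A z y ⊗[k] A x y :=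
      TensorProduct.lift ((LinearMap.rTensorHom (A x y)) ∘ₗ (mul z x y)
        ∘ₗ ((mul z y x c) ∘ₗ (S x y))) with hK
    have hK1 : ∀ (u : A x y) (t : A x y ⊗[k] A x y),
        K (u ⊗ₜ t)
          = TensorProduct.map (mul z x y (mul z y x c (S x y u))) LinearMap.id t := by
      intro u t
      simp only [hK, TensorProduct.lift.tmul, LinearMap.comp_apply, LinearMap.rTensorHom,
        LinearMap.coe_mk, AddHom.coe_mk, LinearMap.rTensor]
    have hK2 : ∀ (t : A x y ⊗[k] A x y) (v : A x y),
        K ((TensorProduct.assoc k (A x y) (A x y) (A x y)) (t ⊗ₜ v))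
          = (mul z y y c (TensorProduct.lift (mul y x y)
              ((TensorProduct.map (S x y) LinearMap.id) t))) ⊗ₜ v := by
      intro t v
      induction t using TensorProduct.induction_on with
      | zero => simp
      | tmul p q => simp [hK1, mul_assoc']
      | add s t h1 h2 => simp [add_tmul, h1, h2]
    have hb : (∑ i ∈ s, (ε x y i.1) • i.2) = d := by
      have h := counit_left x y d
      rw [hs] at h
      simpa using h
    calc (canMap A Δ mul z x y) ((canInv A Δ mul S z x y) (c ⊗ₜ d))
        = (canMap A Δ mul z x y)
            (TensorProduct.map ((mul z y x c) ∘ₗ S x y) LinearMap.id (Δ x y d)) := by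
          rw [canInv_tmul]
      _ = ∑ i ∈ s, (canMap A Δ mul z x y) ((mul z y x c (S x y i.1)) ⊗ₜ i.2) := by
          rw [hs]; simp
      _ = ∑ i ∈ s, K (i.1 ⊗ₜ Δ x y i.2) := by
          simp [canMap_tmul, hK1]
      _ = K ((TensorProduct.map LinearMap.id (Δ x y)) (Δ x y d)) := by
          rw [hs]; simp
      _ = K ((TensorProduct.assoc k (A x y) (A x y) (A x y))
            ((TensorProduct.map (Δ x y) LinearMap.id) (Δ x y d))) := by
          rw [coassoc]
      _ = ∑ i ∈ s, K ((TensorProduct.assoc k (A x y) (A x y) (A x y))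
            ((Δ x y i.1) ⊗ₜ i.2)) := by
          rw [hs]; simp
      _ = ∑ i ∈ s, (mul z y y c ((ε x y i.1) • one y)) ⊗ₜ i.2 := by
          simp [hK2, S_right]
      _ = ∑ i ∈ s, (ε x y i.1) • (c ⊗ₜ[k] i.2) := by
          simp [mul_one', smul_tmul']
      _ = c ⊗ₜ d := by
          simp only [← tmul_smul, ← tmul_sum, hb]
      _ = LinearMap.id (R := k) (c ⊗ₜ[k] d) := rfl
  refine ⟨⟨fun t t' h => ?_, fun t => ⟨canInv A Δ mul S z x y t, LinearMap.congr_fun key2 t⟩⟩,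
    key1, key2⟩
  have := LinearMap.congr_fun key1 t
  have h2 := LinearMap.congr_fun key1 t'
  simp only [LinearMap.comp_apply, LinearMap.id_apply] at this h2
  rw [← this, ← h2, h]
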